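/- arXiv:2306.07208 — 5 statements merged into one kernel-verified Lean document; each statement's English description precedes it below -/
import Mathlib

section
/- For Hermitian matrices A and B (over ℂ, of the same finite dimension) and any unitarily invariant matrix norm ‖·‖, one has ‖exp(iA) − exp(iB)‖ ≤ ‖A − B‖. -/
open scoped Matrix.Norms.L2Operator

/-!
Writing `exp a = exp (a / m) ^ m` and telescoping, unitary invariance of `p` gives
`p (exp a - exp b) ≤ m * p (exp (a / m) - exp (b / m)) = p (m • (exp (a / m) - exp (b / m)))`.
As `m → ∞` the argument on the right tends to `a - b`, the derivative of
`t ↦ exp (t • a) - exp (t • b)` at `0`, and `p` is continuous since the space of matrices is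
finite-dimensional.
-/

open NormedSpace Filter Topology

theorem Seminorm.continuous_of_finiteDimensional {E : Type*} [NormedAddCommGroup E]
    [NormedSpace ℝ E] [FiniteDimensional ℝ E] (p : Seminorm ℝ E) : Continuous p := by
  simpa [continuousOn_univ] using p.convexOn.continuousOn_interior

theorem map_pow_sub_pow_le_of_mem_unitary {R F : Type*} [Ring R] [StarMul R] [FunLike F R ℝ]
    [AddGroupSeminormClass F R ℝ] (p : F)
    (hl : ∀ u ∈ unitary R, ∀ x, p (u * x) = p x) (hr : ∀ u ∈ unitary R, ∀ x, p (x * u) = p x)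
    {u v : R} (hu : u ∈ unitary R) (hv : v ∈ unitary R) (m : ℕ) :
    p (u ^ m - v ^ m) ≤ m * p (u - v) := by
  induction m with
  | zero => simp
  | succ m ih =>
    calc p (u ^ (m + 1) - v ^ (m + 1)) = p (u ^ m * (u - v) + (u ^ m - v ^ m) * v) := by
          congr 1; noncomm_ring
      _ ≤ p (u - v) + p (u ^ m - v ^ m) := by
          rw [← hl _ (pow_mem hu m) (u - v), ← hr _ hv (u ^ m - v ^ m)]
          exact map_add_le_add p _ _
      _ ≤ (m + 1 : ℕ) * p (u - v) := by push_cast; linarith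

theorem tendsto_natCast_smul_exp_inv_smul_sub_one {𝔸 : Type*} [NormedRing 𝔸]
    [NormedAlgebra ℝ 𝔸] [CompleteSpace 𝔸] (x : 𝔸) :
    Tendsto (fun m : ℕ => (m : ℝ) • (exp ((m : ℝ)⁻¹ • x) - 1)) atTop (𝓝 x) := by
  have hslope := (hasDerivAt_exp_smul_const x (0 : ℝ)).tendsto_slope_zero_right
  simp only [zero_add, zero_smul, exp_zero, one_mul] at hslope
  simpa [Function.comp_def] using
    hslope.comp (tendsto_inv_atTop_nhdsGT_zero.comp tendsto_natCast_atTop_atTop)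

theorem Seminorm.map_exp_sub_exp_le {𝔸 : Type*} [NormedRing 𝔸] [NormedAlgebra ℝ 𝔸]
    [CompleteSpace 𝔸] [StarRing 𝔸] [ContinuousStar 𝔸] [StarModule ℝ 𝔸]
    (p : Seminorm ℝ 𝔸) (hp : Continuous p)
    (hl : ∀ u ∈ unitary 𝔸, ∀ x, p (u * x) = p x) (hr : ∀ u ∈ unitary 𝔸, ∀ x, p (x * u) = p x)
    {a b : 𝔸} (ha : a ∈ skewAdjoint 𝔸) (hb : b ∈ skewAdjoint 𝔸) :
    p (exp a - exp b) ≤ p (a - b) := by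
  let +nondep : NormedAlgebra ℚ 𝔸 := .restrictScalars ℚ ℝ 𝔸
  have hroot : ∀ (c : 𝔸) (m : ℕ), m ≠ 0 → exp ((m : ℝ)⁻¹ • c) ^ m = exp c := by
    intro c m hm
    rw [← exp_nsmul, ← Nat.cast_smul_eq_nsmul ℝ, smul_smul, mul_inv_cancel₀ (by exact_mod_cast hm),
      one_smul]
  have hunit : ∀ c ∈ skewAdjoint 𝔸, ∀ t : ℝ, exp (t • c) ∈ unitary 𝔸 := fun c hc t =>
    exp_mem_unitary_of_mem_skewAdjoint (skewAdjoint.smul_mem t hc)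
  have hlim : Tendsto (fun m : ℕ => p ((m : ℝ) • (exp ((m : ℝ)⁻¹ • a) - exp ((m : ℝ)⁻¹ • b))))
      atTop (𝓝 (p (a - b))) := by
    refine (hp.tendsto _).comp ?_
    simpa [smul_sub] using (tendsto_natCast_smul_exp_inv_smul_sub_one a).sub
      (tendsto_natCast_smul_exp_inv_smul_sub_one b)
  refine ge_of_tendsto hlim (eventually_atTop.2 ⟨1, fun m hm => ?_⟩)
  have hm : m ≠ 0 := Nat.one_le_iff_ne_zero.mp hm
  calc p (exp a - exp b) = p (exp ((m : ℝ)⁻¹ • a) ^ m - exp ((m : ℝ)⁻¹ • b) ^ m) := by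
        rw [hroot a m hm, hroot b m hm]
    _ ≤ m * p (exp ((m : ℝ)⁻¹ • a) - exp ((m : ℝ)⁻¹ • b)) :=
        map_pow_sub_pow_le_of_mem_unitary p hl hr (hunit a ha _) (hunit b hb _) m
    _ = p ((m : ℝ) • (exp ((m : ℝ)⁻¹ • a) - exp ((m : ℝ)⁻¹ • b))) := by
        rw [map_smul_eq_mul, Real.norm_natCast]

theorem unitarily_invariant_norm_exp_diff_le_general
    (n : ℕ) (A B : Matrix (Fin n) (Fin n) ℂ)
    (hA : A.IsHermitian) (hB : B.IsHermitian)
    (N : Matrix (Fin n) (Fin n) ℂ → ℝ)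
    (hN_add : ∀ M₁ M₂, N (M₁ + M₂) ≤ N M₁ + N M₂)
    (hN_smul : ∀ (c : ℂ) M, N (c • M) = ‖c‖ * N M)
    (hN_unitary : ∀ U V M, U ∈ Matrix.unitaryGroup (Fin n) ℂ →
      V ∈ Matrix.unitaryGroup (Fin n) ℂ → N (U * M * V) = N M) :
    N (NormedSpace.exp (Complex.I • A) - NormedSpace.exp (Complex.I • B)) ≤ N (A - B) := by
  let p : Seminorm ℝ (Matrix (Fin n) (Fin n) ℂ) :=
    (Seminorm.of N hN_add hN_smul).restrictScalars ℝ
  have hl : ∀ U ∈ unitary _, ∀ M, p (U * M) = p M := fun U hU M => by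
    show N _ = N M; simpa using hN_unitary U 1 M hU (one_mem _)
  have hr : ∀ V ∈ unitary _, ∀ M, p (M * V) = p M := fun V hV M => by
    show N _ = N M; simpa using hN_unitary 1 V M (one_mem _) hV
  have hskew : ∀ M : Matrix (Fin n) (Fin n) ℂ, M.IsHermitian → Complex.I • M ∈ skewAdjoint _ :=
    fun M hM => hM.isSelfAdjoint.smul_mem_skewAdjoint Complex.conj_I
  calc N (exp (Complex.I • A) - exp (Complex.I • B)) ≤ N (Complex.I • A - Complex.I • B) :=
        p.map_exp_sub_exp_le p.continuous_of_finiteDimensional hl hr (hskew A hA) (hskew B hB)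
    _ = N (A - B) := by rw [← smul_sub, hN_smul, Complex.norm_I, one_mul]

/-- For Hermitian matrices `A`, `B` and any unitarily invariant matrix norm `N`,
`N (exp (iA) - exp (iB)) ≤ N (A - B)`. -/
theorem unitarily_invariant_norm_exp_diff_le
    (n : ℕ) (A B : Matrix (Fin n) (Fin n) ℂ)
    (hA : A.IsHermitian) (hB : B.IsHermitian)
    (N : Matrix (Fin n) (Fin n) ℂ → ℝ)
    (hN_nonneg : ∀ M, 0 ≤ N M)
    (hN_zero : ∀ M, N M = 0 ↔ M = 0)
    (hN_add : ∀ M₁ M₂, N (M₁ + M₂) ≤ N M₁ + N M₂)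
    (hN_smul : ∀ (c : ℂ) M, N (c • M) = ‖c‖ * N M)
    (hN_unitary : ∀ U V M, U ∈ Matrix.unitaryGroup (Fin n) ℂ →
      V ∈ Matrix.unitaryGroup (Fin n) ℂ → N (U * M * V) = N M) :
    N (NormedSpace.exp (Complex.I • A) - NormedSpace.exp (Complex.I • B)) ≤ N (A - B) :=
  unitarily_invariant_norm_exp_diff_le_general n A B hA hB N hN_add hN_smul hN_unitary
end

section
/- Let θ : Fin R × Fin M → ℝ and define for K ≥ 1 the K-fold repeated parameters θᴷ : Fin (K·R) × Fin M → ℝ by θᴷ_{r,j} = θ_{r mod R, j}. Define χ_{j,j'}(θ) = (1/2)·∑_{r} θ_{r,j} θ_{r,j'} + (1/2)·∑_{r>r'} (θ_{r,j} θ_{r',j'} − θ_{r,j'} θ_{r',j}), where the second sum runs over pairs r > r' in Fin R. Then for all j, j': χ_{j,j'}(θᴷ) = K · χ_{j,j'}(θ) (with the χ for θᴷ computed with R replaced by K·R). -/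
/-!
For fixed `j, j'` put `a r = θ (r, j)` and `b r = θ (r, j')`; for the repeated parameters these
are `R`-periodic sequences. The diagonal sum over `K * R` layers is `K` copies of the one over `R`
layers. In the triangular sum over `r' < r`, the pairs inside one block give `K` copies of the
original triangular sum, and the pairs in two different blocks give `K.choose 2` copies of the
full square sum `∑ r, ∑ r', (a r * b r' - b r * a r') = (∑ a) * (∑ b) - (∑ b) * (∑ a) = 0`.
-/

open Finset

/-- The second-order BCH coefficient `χ_{j,j'}(θ)` for an ansatz with `R` layers. -/
noncomputable def chi (R M : ℕ) (θ : Fin R × Fin M → ℝ) (j j' : Fin M) : ℝ :=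
  (1 / 2) * ∑ r : Fin R, θ (r, j) * θ (r, j') +
    (1 / 2) * ∑ r : Fin R, ∑ r' ∈ univ.filter (fun r' => r' < r),
      (θ (r, j) * θ (r', j') - θ (r, j') * θ (r', j))

open Function

section Periodic

variable {M : Type*} [AddCommMonoid M] {R : ℕ}

theorem Function.Periodic.map_mul_add {α : Type*} {a : ℕ → α} (ha : Periodic a R) (k t : ℕ) :
    a (k * R + t) = a t := by
  simpa [add_comm] using ha.nat_mul k t

theorem Function.Periodic.sum_range_add_mul {a : ℕ → M} (ha : Periodic a R) (k n : ℕ) :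
    ∑ t ∈ range n, a (k * R + t) = ∑ t ∈ range n, a t :=
  sum_congr rfl fun t _ => ha.map_mul_add k t

theorem Function.Periodic.sum_range_mul {a : ℕ → M} (ha : Periodic a R) (K : ℕ) :
    ∑ r ∈ range (K * R), a r = K • ∑ r ∈ range R, a r := by
  induction K with
  | zero => simp
  | succ k ih => rw [Nat.succ_mul, sum_range_add, ih, ha.sum_range_add_mul, succ_nsmul]

theorem sum_range_mul_sum_range_of_periodic {F : ℕ → ℕ → M}
    (hF₁ : ∀ r', Periodic (F · r') R) (hF₂ : ∀ r, Periodic (F r) R) (K : ℕ) :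
    ∑ r ∈ range (K * R), ∑ r' ∈ range r, F r r' =
      K • ∑ r ∈ range R, ∑ r' ∈ range r, F r r' +
        K.choose 2 • ∑ r ∈ range R, ∑ r' ∈ range R, F r r' := by
  induction K with
  | zero => simp
  | succ k ih =>
    have block : ∀ i ∈ range R, ∑ r' ∈ range (k * R + i), F (k * R + i) r' =
        k • ∑ r' ∈ range R, F i r' + ∑ r' ∈ range i, F i r' := fun i _ => by
      rw [sum_congr rfl fun r' _ => (hF₁ r').map_mul_add k i, sum_range_add, (hF₂ i).sum_range_mul,
        (hF₂ i).sum_range_add_mul]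
    rw [Nat.succ_mul, sum_range_add, ih, sum_congr rfl block, sum_add_distrib, ← smul_sum,
      Nat.choose_succ_succ', Nat.choose_one_right, succ_nsmul, add_nsmul]
    abel

end Periodic

/-- `chi` for layer parameters given as sequences `a r = θ (r, j)`, `b r = θ (r, j')`. -/
noncomputable def chiSeq (R : ℕ) (a b : ℕ → ℝ) : ℝ :=
  (1 / 2) * ∑ r ∈ range R, a r * b r +
    (1 / 2) * ∑ r ∈ range R, ∑ r' ∈ range r, (a r * b r' - b r * a r')

theorem chiSeq_mul_of_periodic {R : ℕ} {a b : ℕ → ℝ} (ha : Periodic a R) (hb : Periodic b R)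
    (K : ℕ) : chiSeq (K * R) a b = K * chiSeq R a b := by
  have hprod : Periodic (fun r => a r * b r) R := ha.mul hb
  have hsq : ∑ r ∈ range R, ∑ r' ∈ range R, (a r * b r' - b r * a r') = 0 := by
    simp only [sum_sub_distrib, ← sum_mul_sum]
    ring
  rw [chiSeq, chiSeq, hprod.sum_range_mul, sum_range_mul_sum_range_of_periodic
    (fun _ r => by simp only [ha r, hb r]) (fun _ r' => by simp only [ha r', hb r']), hsq]
  simp only [nsmul_eq_mul, smul_zero, add_zero]
  ring

theorem sum_fin_sum_filter_lt {M : Type*} [AddCommMonoid M] (n : ℕ) (f : ℕ → ℕ → M) :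
    ∑ r : Fin n, ∑ r' ∈ univ.filter (· < r), f r r' = ∑ r ∈ range n, ∑ r' ∈ range r, f r r' := by
  rw [← Fin.sum_univ_eq_sum_range]
  refine sum_congr rfl fun r _ => ?_
  rw [filter_gt_eq_Iio, ← Nat.Iio_eq_range, ← Fin.map_valEmbedding_Iio, sum_map]
  rfl

theorem chi_eq_chiSeq {R M : ℕ} (θ : Fin R × Fin M → ℝ) (Θ : ℕ → Fin M → ℝ)
    (hθ : ∀ r j, θ (r, j) = Θ r j) (j j' : Fin M) :
    chi R M θ j j' = chiSeq R (Θ · j) (Θ · j') := by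
  simp only [chi, chiSeq, hθ, Fin.sum_univ_eq_sum_range (fun r => Θ r j * Θ r j'),
    sum_fin_sum_filter_lt R (fun r r' => Θ r j * Θ r' j' - Θ r j' * Θ r' j)]

theorem chi_repeat_general (K R M : ℕ) (hR : 0 < R)
    (θ : Fin R × Fin M → ℝ) (j j' : Fin M) :
    chi (K * R) M
      (fun p => θ (⟨(p.1 : ℕ) % R, Nat.mod_lt _ hR⟩, p.2)) j j'
      = (K : ℝ) * chi R M θ j j' := by
  set Θ : ℕ → Fin M → ℝ := fun r j => θ (⟨r % R, Nat.mod_lt _ hR⟩, j)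
  have hΘ : ∀ j, Periodic (Θ · j) R := fun j r => by simp only [Θ, Nat.add_mod_right]
  rw [chi_eq_chiSeq _ Θ (fun _ _ => rfl), chiSeq_mul_of_periodic (hΘ j) (hΘ j'),
    chi_eq_chiSeq θ Θ fun r _ => by simp only [Θ, Nat.mod_eq_of_lt r.isLt]]

/-- Repeating the `R`-layer parameters `K` times multiplies `χ` by `K`. -/
theorem chi_repeat (K R M : ℕ) (hK : 0 < K) (hR : 0 < R)
    (θ : Fin R × Fin M → ℝ) (j j' : Fin M) :
    chi (K * R) M
      (fun p => θ (⟨(p.1 : ℕ) % R, Nat.mod_lt _ hR⟩, p.2)) j j'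
      = (K : ℝ) * chi R M θ j j' :=
  chi_repeat_general K R M hR θ j j'
end

section
/- Let f : Fin R × Fin R → ℝ be antisymmetric in the sense that f(r,r') = −f(r',r) for all r, r'. Extend to g : Fin (K·R) × Fin (K·R) → ℝ by g(r,r') = f(r mod R, r' mod R). Then ∑_{r > r'} g(r,r') = K · ∑_{r > r'} f(r,r'), where both sums run over strictly ordered pairs of indices. -/
open Finset

/-- For an antisymmetric `f : Fin R × Fin R → ℝ` extended periodically to `Fin (K*R)`,
the strictly ordered double sum picks up a factor `K`. -/
theorem antisym_periodic_sum (K R : ℕ) (hK : 0 < K) (hR : 0 < R)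
    (f : Fin R × Fin R → ℝ)
    (hf : ∀ r r' : Fin R, f (r, r') = - f (r', r)) :
    ∑ r : Fin (K * R), ∑ r' ∈ univ.filter (fun r' => r' < r),
        f (⟨(r : ℕ) % R, Nat.mod_lt _ hR⟩, ⟨(r' : ℕ) % R, Nat.mod_lt _ hR⟩)
      = (K : ℝ) * ∑ r : Fin R, ∑ r' ∈ univ.filter (fun r' => r' < r), f (r, r') := by
  have hS : (∑ a : Fin R, ∑ b : Fin R, f (a, b)) = 0 := by
    have h1 : (∑ a : Fin R, ∑ b : Fin R, f (a, b))
        = - ∑ a : Fin R, ∑ b : Fin R, f (a, b) := by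
      calc (∑ a : Fin R, ∑ b : Fin R, f (a, b))
          = ∑ a : Fin R, ∑ b : Fin R, - f (b, a) :=
            Finset.sum_congr rfl fun a _ => Finset.sum_congr rfl fun b _ => hf a b
        _ = - ∑ a : Fin R, ∑ b : Fin R, f (b, a) := by
            simp [← Finset.sum_neg_distrib]
        _ = - ∑ a : Fin R, ∑ b : Fin R, f (a, b) := by rw [Finset.sum_comm]
    linarith
  -- reindex a sum over Fin (K*R) as a double sum
  have key : ∀ F : Fin (K * R) → ℝ,
      (∑ r : Fin (K * R), F r) = ∑ i : Fin K, ∑ a : Fin R, F (finProdFinEquiv (i, a)) := by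
    intro F
    rw [← Fintype.sum_equiv finProdFinEquiv (fun x => F (finProdFinEquiv x)) F fun x => rfl,
      Fintype.sum_prod_type]
  have hval : ∀ (i : Fin K) (a : Fin R),
      ((finProdFinEquiv (i, a) : Fin (K * R)) : ℕ) = (a : ℕ) + R * (i : ℕ) := by
    intro i a; rfl
  have hmod : ∀ (i : Fin K) (a : Fin R), ((a : ℕ) + R * (i : ℕ)) % R = (a : ℕ) := by
    intro i a
    rw [Nat.add_mul_mod_self_left, Nat.mod_eq_of_lt a.isLt]
  have hord : ∀ (i j : Fin K) (a b : Fin R),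
      ((b : ℕ) + R * (j : ℕ) < (a : ℕ) + R * (i : ℕ)) ↔
        ((j : ℕ) < (i : ℕ) ∨ ((j : ℕ) = (i : ℕ) ∧ (b : ℕ) < (a : ℕ))) := by
    intro i j a b
    have ha := a.isLt
    have hb := b.isLt
    constructor
    · intro h
      rcases Nat.lt_trichotomy (j : ℕ) (i : ℕ) with h1 | h1 | h1
      · exact Or.inl h1
      · rw [h1] at h
        exact Or.inr ⟨h1, by omega⟩
      · exfalso
        have h2 : R * ((i : ℕ) + 1) ≤ R * (j : ℕ) := Nat.mul_le_mul_left R h1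
        rw [Nat.mul_succ] at h2
        set X := R * (i : ℕ)
        set Y := R * (j : ℕ)
        omega
    · rintro (h1 | ⟨h1, h2⟩)
      · have h2 : R * ((j : ℕ) + 1) ≤ R * (i : ℕ) := Nat.mul_le_mul_left R h1
        rw [Nat.mul_succ] at h2
        set X := R * (i : ℕ)
        set Y := R * (j : ℕ)
        omega
      · rw [h1]
        omega
  -- rewrite both sides using sum_filter
  have hT : (∑ r : Fin R, ∑ r' ∈ univ.filter (fun r' => r' < r), f (r, r'))
      = ∑ a : Fin R, ∑ b : Fin R, if b < a then f (a, b) else 0 := by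
    refine Finset.sum_congr rfl fun a _ => ?_
    rw [Finset.sum_filter]
  set T : ℝ := ∑ a : Fin R, ∑ b : Fin R, if b < a then f (a, b) else 0 with hTdef
  calc (∑ r : Fin (K * R), ∑ r' ∈ univ.filter (fun r' => r' < r),
        f (⟨(r : ℕ) % R, Nat.mod_lt _ hR⟩, ⟨(r' : ℕ) % R, Nat.mod_lt _ hR⟩))
      = ∑ r : Fin (K * R), ∑ r' : Fin (K * R), if r' < r then
          f (⟨(r : ℕ) % R, Nat.mod_lt _ hR⟩, ⟨(r' : ℕ) % R, Nat.mod_lt _ hR⟩) else 0 := by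
        refine Finset.sum_congr rfl fun r _ => ?_
        rw [Finset.sum_filter]
    _ = ∑ i : Fin K, ∑ a : Fin R, ∑ j : Fin K, ∑ b : Fin R,
          if (j : ℕ) < (i : ℕ) ∨ ((j : ℕ) = (i : ℕ) ∧ (b : ℕ) < (a : ℕ)) then f (a, b) else 0 := by
        rw [key]
        refine Finset.sum_congr rfl fun i _ => Finset.sum_congr rfl fun a _ => ?_
        rw [key]
        refine Finset.sum_congr rfl fun j _ => Finset.sum_congr rfl fun b _ => ?_
        congr 1
        · show ((finProdFinEquiv (j, b) : Fin (K*R)) < finProdFinEquiv (i, a)) = _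
          rw [Fin.lt_def, hval, hval, hord]
        · refine congrArg f (Prod.ext (Fin.ext ?_) (Fin.ext ?_)) <;> simp [hval, hmod]
    _ = ∑ i : Fin K, ∑ j : Fin K, ∑ a : Fin R, ∑ b : Fin R,
          if (j : ℕ) < (i : ℕ) ∨ ((j : ℕ) = (i : ℕ) ∧ (b : ℕ) < (a : ℕ)) then f (a, b) else 0 := by
        refine Finset.sum_congr rfl fun i _ => ?_
        rw [Finset.sum_comm]
    _ = ∑ i : Fin K, ∑ j : Fin K, if j = i then T else 0 := by
        refine Finset.sum_congr rfl fun i _ => Finset.sum_congr rfl fun j _ => ?_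
        rcases Nat.lt_trichotomy (j : ℕ) (i : ℕ) with h1 | h1 | h1
        · have hne : ¬ (j = i) := fun h => by simp [h] at h1
          rw [if_neg hne]
          have : (∑ a : Fin R, ∑ b : Fin R,
              if (j : ℕ) < (i : ℕ) ∨ ((j : ℕ) = (i : ℕ) ∧ (b : ℕ) < (a : ℕ)) then f (a, b) else 0)
              = ∑ a : Fin R, ∑ b : Fin R, f (a, b) := by
            refine Finset.sum_congr rfl fun a _ => Finset.sum_congr rfl fun b _ => ?_
            rw [if_pos (Or.inl h1)]
          rw [this, hS]
        · have heq : j = i := Fin.ext h1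
          rw [if_pos heq, hTdef]
          refine Finset.sum_congr rfl fun a _ => Finset.sum_congr rfl fun b _ => ?_
          have hc : ((j : ℕ) < (i : ℕ) ∨ ((j : ℕ) = (i : ℕ) ∧ (b : ℕ) < (a : ℕ))) ↔ (b < a) := by
            rw [Fin.lt_def]; omega
          simp only [hc]
        · have hne : ¬ (j = i) := fun h => by simp [h] at h1
          rw [if_neg hne]
          refine Finset.sum_eq_zero fun a _ => Finset.sum_eq_zero fun b _ => ?_
          rw [if_neg]
          omega
    _ = ∑ i : Fin K, T := by
        refine Finset.sum_congr rfl fun i _ => ?_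
        rw [Finset.sum_ite_eq' univ i (fun _ => T), if_pos (Finset.mem_univ i)]
    _ = (K : ℝ) * T := by
        rw [Finset.sum_const, Finset.card_univ, Fintype.card_fin, nsmul_eq_mul]
    _ = (K : ℝ) * ∑ r : Fin R, ∑ r' ∈ univ.filter (fun r' => r' < r), f (r, r') := by
        rw [hT]
end

section
/- For any F : Fin R × Fin R → ℝ and K ≥ 1, the strictly ordered double sum over the periodic extension satisfies ∑_{(r,r') ∈ Fin(KR)², r > r'} F(r mod R, r' mod R) = (K(K+1)/2)·∑_{r > r'} F(r,r') + (K(K−1)/2)·∑_{r ≤ r'} F(r,r'), where all right-hand sums are over Fin R. -/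
open Finset

private lemma block_sum' (g : ℕ → ℝ) (R K m : ℕ) (hm : m ≤ R) :
    ∑ r ∈ Ico (K*R) (K*R + m), g (r % R) = ∑ b ∈ range m, g b := by
  rw [Finset.sum_Ico_eq_sum_range]
  simp only [Nat.add_sub_cancel_left]
  refine Finset.sum_congr rfl fun i hi => ?_
  rw [add_comm, Nat.add_mul_mod_self_right, Nat.mod_eq_of_lt (lt_of_lt_of_le (mem_range.mp hi) hm)]

private lemma sum_range_split' (f : ℕ → ℝ) (n m : ℕ) :
    ∑ r ∈ range (n+m), f r = ∑ r ∈ range n, f r + ∑ r ∈ Ico n (n+m), f r := by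
  rw [range_eq_Ico, ← Finset.sum_Ico_consecutive f (Nat.zero_le n) (Nat.le_add_right n m),
    ← range_eq_Ico]

private lemma periodic_full' (g : ℕ → ℝ) (R K : ℕ) :
    ∑ r ∈ range (K*R), g (r % R) = (K : ℝ) * ∑ b ∈ range R, g b := by
  induction K with
  | zero => simp
  | succ K ih =>
    have h : (K+1)*R = K*R + R := by ring
    rw [h, sum_range_split', ih, block_sum' g R K R le_rfl]
    push_cast; ring

private lemma key' (R : ℕ) (g : ℕ → ℕ → ℝ)
    (hg : ∀ r r', g r r' = g (r % R) (r' % R)) (K : ℕ) :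
    ∑ r ∈ range (K*R), ∑ r' ∈ range r, g r r'
      = ((K : ℝ) * ((K : ℝ) + 1) / 2) * (∑ a ∈ range R, ∑ b ∈ range a, g a b)
        + ((K : ℝ) * ((K : ℝ) - 1) / 2) * (∑ a ∈ range R, ∑ b ∈ Ico a R, g a b) := by
  induction K with
  | zero => simp
  | succ K ih =>
    have hKR : (K+1)*R = K*R + R := by ring
    rw [hKR, sum_range_split', ih]
    have hblock : ∑ r ∈ Ico (K*R) (K*R + R), ∑ r' ∈ range r, g r r'
        = ∑ a ∈ range R, ((K : ℝ) * ∑ b ∈ range R, g a b + ∑ b ∈ range a, g a b) := by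
      rw [Finset.sum_Ico_eq_sum_range]
      simp only [Nat.add_sub_cancel_left]
      refine Finset.sum_congr rfl fun a ha => ?_
      have haR : a < R := mem_range.mp ha
      have hmod : (K*R + a) % R = a := by
        rw [add_comm, Nat.add_mul_mod_self_right, Nat.mod_eq_of_lt haR]
      have h1 : ∀ r' ∈ range (K*R + a), g (K*R + a) r' = g a (r' % R) := by
        intro r' _
        rw [hg (K*R + a) r', hmod]
      rw [Finset.sum_congr rfl h1, sum_range_split', periodic_full' (g a) R K,
        block_sum' (g a) R K a haR.le]
    have hrange : ∀ a ∈ range R, ∑ b ∈ range R, g a b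
        = (∑ b ∈ range a, g a b) + ∑ b ∈ Ico a R, g a b := by
      intro a ha
      rw [range_eq_Ico, ← Finset.sum_Ico_consecutive (g a) (Nat.zero_le a) (mem_range.mp ha).le,
        ← range_eq_Ico]
    rw [hblock, Finset.sum_add_distrib, ← Finset.mul_sum,
      Finset.sum_congr rfl hrange, Finset.sum_add_distrib]
    push_cast
    ring

private lemma fin_filter_lt' (n : ℕ) (h : ℕ → ℝ) (r : Fin n) :
    ∑ r' ∈ univ.filter (fun r' => r' < r), h (r' : ℕ) = ∑ j ∈ range (r : ℕ), h j := by
  rw [Finset.sum_filter]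
  simp only [Fin.lt_def]
  rw [Fin.sum_univ_eq_sum_range (fun j => if j < (r:ℕ) then h j else 0),
    ← Finset.sum_filter]
  congr 1
  ext j
  simp only [mem_filter, mem_range]
  omega

private lemma fin_filter_le' (n : ℕ) (h : ℕ → ℝ) (r : Fin n) :
    ∑ r' ∈ univ.filter (fun r' => r ≤ r'), h (r' : ℕ) = ∑ j ∈ Ico (r : ℕ) n, h j := by
  rw [Finset.sum_filter]
  simp only [Fin.le_def]
  rw [Fin.sum_univ_eq_sum_range (fun j => if (r:ℕ) ≤ j then h j else 0),
    ← Finset.sum_filter]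
  congr 1
  ext j
  simp only [mem_filter, mem_range, mem_Ico]
  omega

/-- Strictly ordered double sum of a periodically extended function:
`∑_{r>r'}^{KR} F = (K(K+1)/2) ∑_{r>r'}^{R} F + (K(K-1)/2) ∑_{r≤r'}^{R} F`. -/
theorem ordered_periodic_sum (K R : ℕ) (hK : 0 < K) (hR : 0 < R)
    (F : Fin R × Fin R → ℝ) :
    ∑ r : Fin (K * R), ∑ r' ∈ univ.filter (fun r' => r' < r),
        F (⟨(r : ℕ) % R, Nat.mod_lt _ hR⟩, ⟨(r' : ℕ) % R, Nat.mod_lt _ hR⟩)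
      = ((K : ℝ) * ((K : ℝ) + 1) / 2) *
          (∑ r : Fin R, ∑ r' ∈ univ.filter (fun r' => r' < r), F (r, r'))
        + ((K : ℝ) * ((K : ℝ) - 1) / 2) *
          (∑ r : Fin R, ∑ r' ∈ univ.filter (fun r' => r ≤ r'), F (r, r')) := by
  set g : ℕ → ℕ → ℝ :=
    fun a b => F (⟨a % R, Nat.mod_lt _ hR⟩, ⟨b % R, Nat.mod_lt _ hR⟩) with hgdef
  have hg : ∀ r r', g r r' = g (r % R) (r' % R) := by
    intro r r'
    simp [hgdef, Nat.mod_mod_of_dvd]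
  have hFg : ∀ (r r' : Fin R), F (r, r') = g (r : ℕ) (r' : ℕ) := by
    intro r r'
    simp [hgdef, Nat.mod_eq_of_lt r.isLt, Nat.mod_eq_of_lt r'.isLt]
  have hLHS : ∑ r : Fin (K * R), ∑ r' ∈ univ.filter (fun r' => r' < r),
        F (⟨(r : ℕ) % R, Nat.mod_lt _ hR⟩, ⟨(r' : ℕ) % R, Nat.mod_lt _ hR⟩)
      = ∑ r ∈ range (K*R), ∑ r' ∈ range r, g r r' := by
    have h1 : ∀ r : Fin (K*R), ∑ r' ∈ univ.filter (fun r' => r' < r),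
        F (⟨(r : ℕ) % R, Nat.mod_lt _ hR⟩, ⟨(r' : ℕ) % R, Nat.mod_lt _ hR⟩)
        = ∑ j ∈ range (r : ℕ), g (r : ℕ) j := by
      intro r
      exact fin_filter_lt' (K*R) (fun j => g (r : ℕ) j) r
    rw [Finset.sum_congr rfl (fun r _ => h1 r)]
    exact Fin.sum_univ_eq_sum_range (fun i => ∑ j ∈ range i, g i j) (K*R)
  have hR1 : ∑ r : Fin R, ∑ r' ∈ univ.filter (fun r' => r' < r), F (r, r')
      = ∑ a ∈ range R, ∑ b ∈ range a, g a b := by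
    have h1 : ∀ r : Fin R, ∑ r' ∈ univ.filter (fun r' => r' < r), F (r, r')
        = ∑ j ∈ range (r : ℕ), g (r : ℕ) j := by
      intro r
      rw [Finset.sum_congr rfl (fun r' _ => hFg r r')]
      exact fin_filter_lt' R (fun j => g (r : ℕ) j) r
    rw [Finset.sum_congr rfl (fun r _ => h1 r)]
    exact Fin.sum_univ_eq_sum_range (fun i => ∑ j ∈ range i, g i j) R
  have hR2 : ∑ r : Fin R, ∑ r' ∈ univ.filter (fun r' => r ≤ r'), F (r, r')
      = ∑ a ∈ range R, ∑ b ∈ Ico a R, g a b := by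
    have h1 : ∀ r : Fin R, ∑ r' ∈ univ.filter (fun r' => r ≤ r'), F (r, r')
        = ∑ j ∈ Ico (r : ℕ) R, g (r : ℕ) j := by
      intro r
      rw [Finset.sum_congr rfl (fun r' _ => hFg r r')]
      exact fin_filter_le' R (fun j => g (r : ℕ) j) r
    rw [Finset.sum_congr rfl (fun r _ => h1 r)]
    exact Fin.sum_univ_eq_sum_range (fun i => ∑ j ∈ Ico i R, g i j) R
  rw [hLHS, hR1, hR2]
  exact key' R g hg K
end

section
/- For a C¹ function F : ℝ → Matrix (Fin n) (Fin n) ℂ, the derivative of the matrix exponential satisfies (d/dx) exp(F(x)) = ∫₀¹ exp(y·F(x)) · F'(x) · exp((1−y)·F(x)) dy. -/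
/-!
Differentiating `u ↦ exp (u • A) * exp ((1 - u) • B)` on `[0, 1]` gives Duhamel's formula
`exp A - exp B = ∫₀¹ exp (y • A) * (A - B) * exp ((1 - y) • B) dy`. With `A = F t`, `B = F x` it
writes the difference quotient of `exp ∘ F` at `x` as an integral depending continuously on the
pair `(F t, slope F x t)`, which tends to `(F x, F' x)` as `t → x`.
-/

open scoped Matrix.Norms.L2Operator

open NormedSpace Filter Topology

section

variable {𝔸 : Type*} [NormedRing 𝔸] [NormedAlgebra ℝ 𝔸] [CompleteSpace 𝔸]

@[fun_prop]
theorem continuous_exp_of_normedAlgebra_real : Continuous (exp : 𝔸 → 𝔸) :=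
  continuous_iff_continuousAt.2 fun A => (exp_analytic (𝕂 := ℝ) A).continuousAt

theorem exp_sub_exp_eq_integral (A B : 𝔸) :
    exp A - exp B = ∫ y in (0 : ℝ)..1, exp (y • A) * (A - B) * exp ((1 - y) • B) := by
  have hderiv : ∀ y ∈ Set.uIcc (0 : ℝ) 1,
      HasDerivAt (fun u : ℝ => exp (u • A) * exp ((1 - u) • B))
        (exp (y • A) * (A - B) * exp ((1 - y) • B)) y := by
    intro y _
    have hB : HasDerivAt (fun u : ℝ => exp ((1 - u) • B))
        ((-1 : ℝ) • (B * exp ((1 - y) • B))) y :=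
      (hasDerivAt_exp_smul_const' B (1 - y)).scomp y ((hasDerivAt_id y).const_sub 1)
    refine ((hasDerivAt_exp_smul_const A y).mul hB).congr_deriv ?_
    simp only [neg_one_smul, mul_neg, mul_sub, sub_mul, mul_assoc, ← sub_eq_add_neg]
  rw [intervalIntegral.integral_eq_sub_of_hasDerivAt hderiv
    (Continuous.intervalIntegrable (by fun_prop) 0 1)]
  simp

theorem continuous_integral_exp_smul_mul_mul_exp_smul (B : 𝔸) :
    Continuous fun p : 𝔸 × 𝔸 => ∫ y in (0 : ℝ)..1, exp (y • p.1) * p.2 * exp ((1 - y) • B) :=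
  intervalIntegral.continuous_parametric_intervalIntegral_of_continuous' (by fun_prop) 0 1

theorem slope_exp_comp (f : ℝ → 𝔸) (x t : ℝ) :
    slope (fun t => exp (f t)) x t =
      ∫ y in (0 : ℝ)..1, exp (y • f t) * slope f x t * exp ((1 - y) • f x) := by
  simp only [slope_def_module, exp_sub_exp_eq_integral, ← intervalIntegral.integral_smul,
    mul_smul_comm, smul_mul_assoc]

theorem hasDerivAt_exp_comp {f : ℝ → 𝔸} {f' : 𝔸} {x : ℝ} (hf : HasDerivAt f f' x) :
    HasDerivAt (fun t => exp (f t))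
      (∫ y in (0 : ℝ)..1, exp (y • f x) * f' * exp ((1 - y) • f x)) x := by
  have hpair : Tendsto (fun t => (f t, slope f x t)) (𝓝[≠] x) (𝓝 (f x, f')) :=
    (hf.continuousAt.tendsto.mono_left nhdsWithin_le_nhds).prodMk_nhds
      (hasDerivAt_iff_tendsto_slope.mp hf)
  rw [hasDerivAt_iff_tendsto_slope, funext (slope_exp_comp f x)]
  exact ((continuous_integral_exp_smul_mul_mul_exp_smul (f x)).tendsto _).comp hpair

end

theorem hasDerivAt_exp_of_contDiff_general (n : ℕ)
    (F F' : ℝ → Matrix (Fin n) (Fin n) ℂ)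
    (hF : ∀ x, HasDerivAt F (F' x) x)
    (x : ℝ) :
    HasDerivAt (fun t => NormedSpace.exp (F t))
      (∫ y in (0 : ℝ)..1,
        NormedSpace.exp (y • F x) * F' x * NormedSpace.exp ((1 - y) • F x)) x :=
  hasDerivAt_exp_comp (hF x)

/-- Derivative of the matrix exponential:
`(d/dx) exp(F x) = ∫₀¹ exp(y F x) F'(x) exp((1-y) F x) dy` for a `C¹` matrix-valued `F`. -/
theorem hasDerivAt_exp_of_contDiff (n : ℕ)
    (F F' : ℝ → Matrix (Fin n) (Fin n) ℂ)
    (hF : ∀ x, HasDerivAt F (F' x) x)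
    (hF' : Continuous F') (x : ℝ) :
    HasDerivAt (fun t => NormedSpace.exp (F t))
      (∫ y in (0 : ℝ)..1,
        NormedSpace.exp (y • F x) * F' x * NormedSpace.exp ((1 - y) • F x)) x :=
  hasDerivAt_exp_of_contDiff_general n F F' hF x
end
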